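/- (Scaling relation for the Gaussian likelihood, second natural parameter.) Define ℓ(x, η₁, η₂) := η₁·x + η₂·x² + η₁²/(4·η₂) + (1/2)·Real.log(−2·η₂). Then for every x ∈ ℝ, η₁ ∈ ℝ, η₂ < 0, ω > 0, and every natural number j ≥ 1, the j-th derivative of the function t ↦ ℓ(ω·x, η₁/ω, t) at the point η₂/ω² equals ω^(2j) times the j-th derivative of the function t ↦ ℓ(x, η₁, t) at the point η₂. -/

import Mathlib

/-!
Away from `t = 0` the rescaled log-likelihood is `t ↦ ℓ(x, η₁, ω² t) - log |ω|`: the data and the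
natural parameters recombine unchanged, and only the normalizer `½ log(-2t)` picks up the
log-Jacobian. The constant disappears under `j ≥ 1` derivatives, and the chain rule through the
linear map `t ↦ ω² t` contributes the factor `(ω²)^j`.
-/

noncomputable def gaussLogLik (x η₁ η₂ : ℝ) : ℝ :=
  η₁ * x + η₂ * x ^ 2 + η₁ ^ 2 / (4 * η₂) + (1 / 2) * Real.log (-2 * η₂)

open Topology

theorem iteratedDeriv_comp_mul_left {𝕜 F : Type*} [NontriviallyNormedField 𝕜]
    [NormedAddCommGroup F] [NormedSpace 𝕜 F] (n : ℕ) (c : 𝕜) (f : 𝕜 → F) :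
    iteratedDeriv n (fun x => f (c * x)) = fun x => c ^ n • iteratedDeriv n f (c * x) := by
  induction n with
  | zero => simp
  | succ n ih =>
    funext x
    rw [iteratedDeriv_succ, ih, deriv_fun_const_smul_field, deriv_comp_mul_left,
      iteratedDeriv_succ, pow_succ, mul_smul]

theorem gaussLogLik_scale (x η₁ : ℝ) {ω t : ℝ} (hω : ω ≠ 0) (ht : t ≠ 0) :
    gaussLogLik (ω * x) (η₁ / ω) t = -Real.log |ω| + gaussLogLik x η₁ (ω ^ 2 * t) := by
  have hlog : Real.log (-2 * (ω ^ 2 * t)) = 2 * Real.log |ω| + Real.log (-2 * t) := by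
    rw [show -2 * (ω ^ 2 * t) = ω ^ 2 * (-2 * t) by ring,
      Real.log_mul (by positivity) (by simpa using ht), Real.log_pow, Real.log_abs]
    push_cast
    ring
  unfold gaussLogLik
  rw [hlog]
  field_simp
  ring

/-- (Scaling relation for the Gaussian likelihood, second natural parameter.)
For `j ≥ 1`, the `j`-th derivative in `η̃₂ = η₂/ω²` of the scaled log-likelihood equals
`ω^(2j)` times the `j`-th derivative in `η₂` of the original log-likelihood. -/
theorem gauss_scaling_second_natural_param
    (x η₁ η₂ ω : ℝ) (hη₂ : η₂ < 0) (hω : 0 < ω) (j : ℕ) (hj : 1 ≤ j) :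
    iteratedDeriv j (fun t : ℝ => gaussLogLik (ω * x) (η₁ / ω) t) (η₂ / ω ^ 2) =
      ω ^ (2 * j) * iteratedDeriv j (fun t : ℝ => gaussLogLik x η₁ t) η₂ := by
  have hscale : (fun t : ℝ => gaussLogLik (ω * x) (η₁ / ω) t) =ᶠ[𝓝 (η₂ / ω ^ 2)]
      fun t => -Real.log |ω| + gaussLogLik x η₁ (ω ^ 2 * t) := by
    filter_upwards [isOpen_ne.mem_nhds (div_neg_of_neg_of_pos hη₂ (by positivity)).ne]
      with t ht using gaussLogLik_scale x η₁ hω.ne' ht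
  rw [hscale.iteratedDeriv_eq, iteratedDeriv_const_add hj, iteratedDeriv_comp_mul_left]
  dsimp only
  rw [mul_div_cancel₀ _ (by positivity), pow_mul, smul_eq_mul]
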